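/- Let (ω, θ) be a normalized Vaisman structure, so that ω = d^c θ + θ ∧ θ^c with dω = θ ∧ ω. For a > 0, define θ_a = aθ and ω_a = aω + (a² − a) θ ∧ θ^c. Then dω_a = θ_a ∧ ω_a. -/

import Mathlib

/-!
STATEMENT 6: For a normalized Vaisman structure `(ω, θ)` (so `dω = θ ∧ ω`, `dθ = 0`,
and `d(θ ∧ θᶜ) = θ ∧ (ω - θ ∧ θᶜ)`, i.e. `ω = dᶜθ + θ ∧ θᶜ` with `d dᶜθ = θ ∧ dᶜθ`),
the `Σ_a`-homothety `θ_a = aθ`, `ω_a = aω + (a² - a) θ ∧ θᶜ` (for `a > 0`) satisfies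
the LCK equation `dω_a = θ_a ∧ ω_a`.
-/

noncomputable section

/-- exterior derivative of a 1-form field. -/
def d1 {E : Type*} [NormedAddCommGroup E] [NormedSpace ℝ E]
    (θ : E → E →L[ℝ] ℝ) (x u v : E) : ℝ :=
  fderiv ℝ (fun y => θ y v) x u - fderiv ℝ (fun y => θ y u) x v

/-- exterior derivative of a (scalar-valued, unbundled) 2-form field. -/
def d2' {E : Type*} [NormedAddCommGroup E] [NormedSpace ℝ E]
    (σ : E → E → E → ℝ) (x u v w : E) : ℝ :=
  fderiv ℝ (fun y => σ y v w) x u - fderiv ℝ (fun y => σ y u w) x v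
    + fderiv ℝ (fun y => σ y u v) x w

/-- wedge product of two 1-form fields. -/
def wedge11 {E : Type*} [NormedAddCommGroup E] [NormedSpace ℝ E]
    (α β : E → E →L[ℝ] ℝ) (x u v : E) : ℝ :=
  α x u * β x v - α x v * β x u

/-- wedge product of a 1-form field with an unbundled 2-form field. -/
def wedge12' {E : Type*} [NormedAddCommGroup E] [NormedSpace ℝ E]
    (θ : E → E →L[ℝ] ℝ) (σ : E → E → E → ℝ) (x u v w : E) : ℝ :=
  θ x u * σ x v w - θ x v * σ x u w + θ x w * σ x u v

theorem sigma_a_homothety_is_lck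
    {E : Type*} [NormedAddCommGroup E] [NormedSpace ℝ E]
    (ω : E → E →L[ℝ] E →L[ℝ] ℝ) (hωsm : ContDiff ℝ (⊤ : ℕ∞) ω)
    (θ θc : E → E →L[ℝ] ℝ) (hθsm : ContDiff ℝ (⊤ : ℕ∞) θ) (hθcsm : ContDiff ℝ (⊤ : ℕ∞) θc)
    -- dω = θ ∧ ω :
    (hLCK : ∀ x u v w, d2' (fun y a b => ω y a b) x u v w
      = wedge12' θ (fun y a b => ω y a b) x u v w)
    -- dθ = 0 :
    (hθclosed : ∀ x u v, d1 θ x u v = 0)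
    -- d(θ ∧ θᶜ) = θ ∧ (ω - θ ∧ θᶜ)  (from ω = dᶜθ + θ ∧ θᶜ) :
    (hdc : ∀ x u v w, d2' (wedge11 θ θc) x u v w
      = wedge12' θ (fun y a b => ω y a b - wedge11 θ θc y a b) x u v w)
    (a : ℝ) (ha : 0 < a) :
    ∀ x u v w,
      d2' (fun y b c => a * ω y b c + (a ^ 2 - a) * wedge11 θ θc y b c) x u v w
        = wedge12' (fun y => a • θ y)
            (fun y b c => a * ω y b c + (a ^ 2 - a) * wedge11 θ θc y b c) x u v w := by

  intro x u v w
  have hω : ∀ b c : E, Differentiable ℝ (fun y => ω y b c) := fun b c =>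
    ((hωsm.clm_apply contDiff_const).clm_apply contDiff_const).differentiable (by simp)
  have hθ : ∀ b : E, Differentiable ℝ (fun y => θ y b) := fun b =>
    (hθsm.clm_apply contDiff_const).differentiable (by simp)
  have hθc : ∀ b : E, Differentiable ℝ (fun y => θc y b) := fun b =>
    (hθcsm.clm_apply contDiff_const).differentiable (by simp)
  have hW : ∀ b c : E, Differentiable ℝ (fun y => wedge11 θ θc y b c) := by
    intro b c
    simp only [wedge11]
    exact ((hθ b).mul (hθc c)).sub ((hθ c).mul (hθc b))
  have key : ∀ b c : E,
      fderiv ℝ (fun y => a * ω y b c + (a ^ 2 - a) * wedge11 θ θc y b c) x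
        = a • fderiv ℝ (fun y => ω y b c) x
          + (a ^ 2 - a) • fderiv ℝ (fun y => wedge11 θ θc y b c) x := by
    intro b c
    rw [fderiv_fun_add (((hω b c) x).const_mul a) (((hW b c) x).const_mul _),
        fderiv_const_mul ((hω b c) x), fderiv_const_mul ((hW b c) x)]
  have e1 := hLCK x u v w
  have e2 := hdc x u v w
  simp only [d2', key, ContinuousLinearMap.add_apply, ContinuousLinearMap.coe_smul',
    Pi.smul_apply, smul_eq_mul]
  simp only [d2', wedge12', wedge11, ContinuousLinearMap.smul_apply, smul_eq_mul] at e1 e2 ⊢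
  linear_combination a * e1 + (a ^ 2 - a) * e2
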